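/- arXiv:1908.05578 — 7 statements merged into one kernel-verified Lean document; each statement's English description precedes it below -/
import Mathlib

section
/- Let λ ≠ 0 and define the 2×2 matrix B = I + (2λ)⁻¹·[[α + iΩ, -i(ũ-u)],[iε(ũ-u)*, α - iΩ]] with Ω = ±√(β² + ε|ũ-u|²), where u, ũ are smooth complex functions of (x,t), ε = ±1, α, β real constants, and β² + ε|ũ-u|² > 0 everywhere. If u and ũ satisfy the Bäcklund relations ũ_x - u_x = iα(ũ-u) + Ω(ũ+u) and ũ_t - u_t = -α(ũ_x - u_x) + iΩ(ũ_x + u_x) - iε(ũ-u)(|ũ|² + |u|²), and u, ũ each solve the NLS equation iu_t + u_xx - 2εu|u|² = 0, then B satisfies B_x = ŨB - BU, where U = [[-iλ, u],[εu*, iλ]] and Ũ is defined similarly with ũ. -/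
/-- x-part of the Darboux compatibility for the NLS Bäcklund matrix `B`:
if the Bäcklund relations hold and `u, ũ` solve NLS, then `B_x = ŨB - BU`. -/
theorem stmt_6 (lam : ℂ) (hlam : lam ≠ 0) (α β ε : ℝ) (hε : ε = 1 ∨ ε = -1)
    (u tu : ℝ → ℝ → ℂ)
    (hu : ContDiff ℝ (⊤ : ℕ∞) fun p : ℝ × ℝ => u p.1 p.2)
    (htu : ContDiff ℝ (⊤ : ℕ∞) fun p : ℝ × ℝ => tu p.1 p.2)
    (Ω : ℝ → ℝ → ℝ)
    (hpos : ∀ x t, 0 < β ^ 2 + ε * (‖tu x t - u x t‖) ^ 2)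
    (hΩ : (∀ x t, Ω x t = Real.sqrt (β ^ 2 + ε * (‖tu x t - u x t‖) ^ 2)) ∨
          (∀ x t, Ω x t = -Real.sqrt (β ^ 2 + ε * (‖tu x t - u x t‖) ^ 2)))
    (B : ℝ → ℝ → Matrix (Fin 2) (Fin 2) ℂ)
    (hB : ∀ x t, B x t = 1 + (2 * lam)⁻¹ •
      !![(α : ℂ) + Complex.I * (Ω x t : ℂ), -Complex.I * (tu x t - u x t);
         Complex.I * (ε : ℂ) * (starRingEnd ℂ) (tu x t - u x t),
         (α : ℂ) - Complex.I * (Ω x t : ℂ)])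
    (hBT1 : ∀ x t, deriv (fun y => tu y t) x - deriv (fun y => u y t) x =
      Complex.I * (α : ℂ) * (tu x t - u x t) + (Ω x t : ℂ) * (tu x t + u x t))
    (hBT2 : ∀ x t, deriv (fun τ => tu x τ) t - deriv (fun τ => u x τ) t =
      -(α : ℂ) * (deriv (fun y => tu y t) x - deriv (fun y => u y t) x) +
        Complex.I * (Ω x t : ℂ) * (deriv (fun y => tu y t) x + deriv (fun y => u y t) x) -
        Complex.I * (ε : ℂ) * (tu x t - u x t) *
          (((‖tu x t‖) ^ 2 : ℝ) + ((‖u x t‖) ^ 2 : ℝ)))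
    (hNLSu : ∀ x t, Complex.I * deriv (fun τ => u x τ) t +
      iteratedDeriv 2 (fun y => u y t) x -
      2 * (ε : ℂ) * u x t * ((‖u x t‖) ^ 2 : ℝ) = 0)
    (hNLStu : ∀ x t, Complex.I * deriv (fun τ => tu x τ) t +
      iteratedDeriv 2 (fun y => tu y t) x -
      2 * (ε : ℂ) * tu x t * ((‖tu x t‖) ^ 2 : ℝ) = 0) :
    ∀ x t (i j : Fin 2),
      deriv (fun y => B y t i j) x =
        (!![-Complex.I * lam, tu x t; (ε : ℂ) * (starRingEnd ℂ) (tu x t), Complex.I * lam] *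
            B x t -
          B x t *
            !![-Complex.I * lam, u x t; (ε : ℂ) * (starRingEnd ℂ) (u x t), Complex.I * lam])
          i j := by
  intro x t i j
  have hud : Differentiable ℝ (fun y => u y t) :=
    (hu.differentiable (by simp)).comp (differentiable_id.prodMk (differentiable_const t))
  have htud : Differentiable ℝ (fun y => tu y t) :=
    (htu.differentiable (by simp)).comp (differentiable_id.prodMk (differentiable_const t))
  have hu1 : HasDerivAt (fun y => u y t) (deriv (fun y => u y t) x) x :=
    (hud x).hasDerivAt
  have htu1 : HasDerivAt (fun y => tu y t) (deriv (fun y => tu y t) x) x :=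
    (htud x).hasDerivAt
  set D := deriv (fun y => tu y t) x - deriv (fun y => u y t) x with hD
  have hv : HasDerivAt (fun y => tu y t - u y t) D x := htu1.sub hu1
  have hBT : D = Complex.I * (α : ℂ) * (tu x t - u x t) + (Ω x t : ℂ) * (tu x t + u x t) :=
    hBT1 x t
  -- real and imaginary parts of the Bäcklund relation
  have h1 := congrArg Complex.re hBT
  have h2 := congrArg Complex.im hBT
  simp only [Complex.add_re, Complex.add_im, Complex.mul_re, Complex.mul_im, Complex.I_re,
    Complex.I_im, Complex.ofReal_re, Complex.ofReal_im, Complex.sub_re, Complex.sub_im,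
    zero_mul, one_mul, zero_sub, sub_zero, zero_add, add_zero, neg_mul, mul_zero] at h1 h2
  -- derivative of Ω in x
  have hΩd : HasDerivAt (fun y => Ω y t)
      (ε * (Complex.normSq (tu x t) - Complex.normSq (u x t))) x := by
    have hre : HasDerivAt (fun y => (tu y t - u y t).re) D.re x :=
      Complex.reCLM.hasFDerivAt.comp_hasDerivAt x hv
    have him : HasDerivAt (fun y => (tu y t - u y t).im) D.im x :=
      Complex.imCLM.hasFDerivAt.comp_hasDerivAt x hv
    have hF : HasDerivAt (fun y => β ^ 2 + ε * Complex.normSq (tu y t - u y t))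
        (ε * ((D.re * (tu x t - u x t).re + (tu x t - u x t).re * D.re) +
          (D.im * (tu x t - u x t).im + (tu x t - u x t).im * D.im))) x := by
      have h := (((hre.mul hre).add (him.mul him)).const_mul ε).const_add (β ^ 2)
      simpa only [Complex.normSq_apply, Pi.mul_apply, Pi.add_apply] using h
    have hFval : ε * ((D.re * (tu x t - u x t).re + (tu x t - u x t).re * D.re) +
          (D.im * (tu x t - u x t).im + (tu x t - u x t).im * D.im)) =
        2 * Ω x t * (ε * (Complex.normSq (tu x t) - Complex.normSq (u x t))) := by
      simp only [Complex.normSq_apply, Complex.sub_re, Complex.sub_im]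
      linear_combination (2 * ε * ((tu x t).re - (u x t).re)) * h1 +
        (2 * ε * ((tu x t).im - (u x t).im)) * h2
    rw [hFval] at hF
    have hFpos : 0 < β ^ 2 + ε * Complex.normSq (tu x t - u x t) := by
      have := hpos x t
      rwa [Complex.sq_norm] at this
    have hne : β ^ 2 + ε * Complex.normSq (tu x t - u x t) ≠ 0 := ne_of_gt hFpos
    have hsq : 0 < Real.sqrt (β ^ 2 + ε * Complex.normSq (tu x t - u x t)) :=
      Real.sqrt_pos.mpr hFpos
    rcases hΩ with h | h
    · have hfun : (fun y => Ω y t) =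
          fun y => Real.sqrt (β ^ 2 + ε * Complex.normSq (tu y t - u y t)) :=
        funext fun y => by rw [h y t, Complex.sq_norm]
      have hΩx : Ω x t = Real.sqrt (β ^ 2 + ε * Complex.normSq (tu x t - u x t)) := by
        rw [h x t, Complex.sq_norm]
      have hΩne : Ω x t ≠ 0 := by rw [hΩx]; exact ne_of_gt hsq
      rw [hfun]
      have hd := (Real.hasDerivAt_sqrt hne).comp x hF
      refine hd.congr_deriv (Eq.symm ?_)
      rw [← hΩx]
      field_simp
    · have hfun : (fun y => Ω y t) =
          fun y => -Real.sqrt (β ^ 2 + ε * Complex.normSq (tu y t - u y t)) :=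
        funext fun y => by rw [h y t, Complex.sq_norm]
      have hΩx : Ω x t = -Real.sqrt (β ^ 2 + ε * Complex.normSq (tu x t - u x t)) := by
        rw [h x t, Complex.sq_norm]
      have hΩne : Ω x t ≠ 0 := by
        rw [hΩx]; exact neg_ne_zero.mpr (ne_of_gt hsq)
      rw [hfun]
      have hd := ((Real.hasDerivAt_sqrt hne).comp x hF).neg
      refine hd.congr_deriv (Eq.symm ?_)
      rw [show Real.sqrt (β ^ 2 + ε * Complex.normSq (tu x t - u x t)) = -Ω x t by
        rw [hΩx]; ring]
      field_simp
  have hΩdC : HasDerivAt (fun y => ((Ω y t : ℝ) : ℂ))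
      ((ε * (Complex.normSq (tu x t) - Complex.normSq (u x t)) : ℝ) : ℂ) x :=
    Complex.ofRealCLM.hasFDerivAt.comp_hasDerivAt x hΩd
  have hvc : HasDerivAt (fun y => (starRingEnd ℂ) (tu y t - u y t)) ((starRingEnd ℂ) D) x :=
    Complex.conjCLE.toContinuousLinearMap.hasFDerivAt.comp_hasDerivAt x hv
  have m1 : ((Complex.normSq (tu x t) : ℝ) : ℂ) = tu x t * (starRingEnd ℂ) (tu x t) :=
    (Complex.mul_conj _).symm
  have m2 : ((Complex.normSq (u x t) : ℝ) : ℂ) = u x t * (starRingEnd ℂ) (u x t) :=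
    (Complex.mul_conj _).symm
  have hBTc := congrArg (starRingEnd ℂ) hBT
  simp only [map_add, map_sub, map_mul, Complex.conj_I, Complex.conj_ofReal] at hBTc
  have hI : (Complex.I : ℂ) ^ 2 = -1 := Complex.I_sq
  have hc : lam * lam⁻¹ = 1 := mul_inv_cancel₀ hlam
  have hBx : B x t =
      !![1 + (2 * lam)⁻¹ * ((α : ℂ) + Complex.I * ((Ω x t : ℝ) : ℂ)),
         (2 * lam)⁻¹ * (-Complex.I * (tu x t - u x t));
         (2 * lam)⁻¹ * (Complex.I * (ε : ℂ) *
           ((starRingEnd ℂ) (tu x t) - (starRingEnd ℂ) (u x t))),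
         1 + (2 * lam)⁻¹ * ((α : ℂ) - Complex.I * ((Ω x t : ℝ) : ℂ))] := by
    rw [hB]
    ext i j
    fin_cases i <;> fin_cases j <;> simp [map_sub] <;> ring
  have E00 : deriv (fun y => B y t 0 0) x =
      (!![-Complex.I * lam, tu x t; (ε : ℂ) * (starRingEnd ℂ) (tu x t), Complex.I * lam] *
          B x t -
        B x t *
          !![-Complex.I * lam, u x t; (ε : ℂ) * (starRingEnd ℂ) (u x t), Complex.I * lam])
        0 0 := by
    have e : (fun y => B y t 0 0) =
        fun y => 1 + (2 * lam)⁻¹ * ((α : ℂ) + Complex.I * ((Ω y t : ℝ) : ℂ)) := by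
      funext y; rw [hB]; simp
    have H : HasDerivAt
        (fun y => (1 : ℂ) + (2 * lam)⁻¹ * ((α : ℂ) + Complex.I * ((Ω y t : ℝ) : ℂ)))
        ((2 * lam)⁻¹ * (Complex.I *
          ((ε * (Complex.normSq (tu x t) - Complex.normSq (u x t)) : ℝ) : ℂ))) x :=
      (((hΩdC.const_mul Complex.I).const_add (α : ℂ)).const_mul ((2 * lam)⁻¹)).const_add 1
    rw [e, H.deriv, hBx]
    simp [Matrix.mul_apply, Fin.sum_univ_two]
    push_cast
    linear_combination ((2 * lam)⁻¹ * Complex.I * ε) * m1 - ((2 * lam)⁻¹ * Complex.I * ε) * m2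
  have E01 : deriv (fun y => B y t 0 1) x =
      (!![-Complex.I * lam, tu x t; (ε : ℂ) * (starRingEnd ℂ) (tu x t), Complex.I * lam] *
          B x t -
        B x t *
          !![-Complex.I * lam, u x t; (ε : ℂ) * (starRingEnd ℂ) (u x t), Complex.I * lam])
        0 1 := by
    have e : (fun y => B y t 0 1) =
        fun y => (2 * lam)⁻¹ * (-Complex.I * (tu y t - u y t)) := by
      funext y; rw [hB]; simp
    have H : HasDerivAt (fun y => (2 * lam)⁻¹ * (-Complex.I * (tu y t - u y t)))
        ((2 * lam)⁻¹ * (-Complex.I * D)) x :=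
      (hv.const_mul (-Complex.I)).const_mul ((2 * lam)⁻¹)
    rw [e, H.deriv, hBx]
    simp [Matrix.mul_apply, Fin.sum_univ_two]
    linear_combination ((2 * lam)⁻¹ * (-Complex.I)) * hBT +
      (-((2 * lam)⁻¹ * α + 1) * (tu x t - u x t)) * hI +
      (-Complex.I ^ 2 * (tu x t - u x t)) * hc
  have E10 : deriv (fun y => B y t 1 0) x =
      (!![-Complex.I * lam, tu x t; (ε : ℂ) * (starRingEnd ℂ) (tu x t), Complex.I * lam] *
          B x t -
        B x t *
          !![-Complex.I * lam, u x t; (ε : ℂ) * (starRingEnd ℂ) (u x t), Complex.I * lam])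
        1 0 := by
    have e : (fun y => B y t 1 0) =
        fun y => (2 * lam)⁻¹ * (Complex.I * (ε : ℂ) * (starRingEnd ℂ) (tu y t - u y t)) := by
      funext y; rw [hB]; simp
    have H : HasDerivAt
        (fun y => (2 * lam)⁻¹ * (Complex.I * (ε : ℂ) * (starRingEnd ℂ) (tu y t - u y t)))
        ((2 * lam)⁻¹ * (Complex.I * (ε : ℂ) * (starRingEnd ℂ) D)) x := by
      have := (hvc.const_mul (Complex.I * (ε : ℂ))).const_mul ((2 * lam)⁻¹)
      simpa [mul_assoc] using this
    rw [e, H.deriv, hBx]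
    simp [Matrix.mul_apply, Fin.sum_univ_two]
    linear_combination ((2 * lam)⁻¹ * Complex.I * ε) * hBTc +
      (-((2 * lam)⁻¹ * α + 1) * ε * ((starRingEnd ℂ) (tu x t) - (starRingEnd ℂ) (u x t))) * hI +
      (-Complex.I ^ 2 * ε * ((starRingEnd ℂ) (tu x t) - (starRingEnd ℂ) (u x t))) * hc
  have E11 : deriv (fun y => B y t 1 1) x =
      (!![-Complex.I * lam, tu x t; (ε : ℂ) * (starRingEnd ℂ) (tu x t), Complex.I * lam] *
          B x t -
        B x t *
          !![-Complex.I * lam, u x t; (ε : ℂ) * (starRingEnd ℂ) (u x t), Complex.I * lam])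
        1 1 := by
    have e : (fun y => B y t 1 1) =
        fun y => 1 + (2 * lam)⁻¹ * ((α : ℂ) - Complex.I * ((Ω y t : ℝ) : ℂ)) := by
      funext y; rw [hB]; simp
    have H : HasDerivAt
        (fun y => (1 : ℂ) + (2 * lam)⁻¹ * ((α : ℂ) - Complex.I * ((Ω y t : ℝ) : ℂ)))
        ((2 * lam)⁻¹ * (-(Complex.I *
          ((ε * (Complex.normSq (tu x t) - Complex.normSq (u x t)) : ℝ) : ℂ)))) x := by
      exact ((((hΩdC.const_mul Complex.I).const_sub (α : ℂ)).const_mul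
        ((2 * lam)⁻¹)).const_add 1)
    rw [e, H.deriv, hBx]
    simp [Matrix.mul_apply, Fin.sum_univ_two]
    push_cast
    linear_combination (-(2 * lam)⁻¹ * Complex.I * ε) * m1 + ((2 * lam)⁻¹ * Complex.I * ε) * m2
  fin_cases i <;> fin_cases j
  · exact E00
  · exact E01
  · exact E10
  · exact E11
end

section
/- Let u, ũ be smooth real functions of (x,t) satisfying the KdV Bäcklund relations (ũ_x + u_x) = (ũ - u)·S and (ũ_t + u_t) = -(3(ũ² - u²) + (ũ - u)_xx)·S with S = √(β² - 2(ũ + u)), where β² - 2(ũ+u) > 0 everywhere. If u solves the KdV equation u_t + u_xxx + 6uu_x = 0, then ũ also solves ũ_t + ũ_xxx + 6ũũ_x = 0. -/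
open scoped ContDiff


/-- The KdV Bäcklund transformation maps KdV solutions to KdV solutions. -/
theorem stmt_7 (β : ℝ) (u tu : ℝ → ℝ → ℝ)
    (hu : ContDiff ℝ (⊤ : ℕ∞) fun p : ℝ × ℝ => u p.1 p.2)
    (htu : ContDiff ℝ (⊤ : ℕ∞) fun p : ℝ × ℝ => tu p.1 p.2)
    (hpos : ∀ x t, 0 < β ^ 2 - 2 * (tu x t + u x t))
    (hBTx : ∀ x t, deriv (fun y => tu y t) x + deriv (fun y => u y t) x =
      (tu x t - u x t) * Real.sqrt (β ^ 2 - 2 * (tu x t + u x t)))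
    (hBTt : ∀ x t, deriv (fun τ => tu x τ) t + deriv (fun τ => u x τ) t =
      -(3 * (tu x t ^ 2 - u x t ^ 2) + iteratedDeriv 2 (fun y => tu y t - u y t) x) *
        Real.sqrt (β ^ 2 - 2 * (tu x t + u x t)))
    (hKdV : ∀ x t, deriv (fun τ => u x τ) t + iteratedDeriv 3 (fun y => u y t) x +
      6 * u x t * deriv (fun y => u y t) x = 0) :
    ∀ x t, deriv (fun τ => tu x τ) t + iteratedDeriv 3 (fun y => tu y t) x +
      6 * tu x t * deriv (fun y => tu y t) x = 0 := by
  intro x t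
  have hT : ContDiff ℝ (⊤ : ℕ∞) (fun y => tu y t) :=
    htu.comp (contDiff_id.prodMk contDiff_const)
  have hU : ContDiff ℝ (⊤ : ℕ∞) (fun y => u y t) :=
    hu.comp (contDiff_id.prodMk contDiff_const)
  set T : ℝ → ℝ := fun y => tu y t with hTdef
  set U : ℝ → ℝ := fun y => u y t with hUdef
  set s : ℝ → ℝ := fun z => Real.sqrt (β ^ 2 - 2 * (T z + U z)) with hsdef
  have hTd : Differentiable ℝ T := hT.differentiable (by simp)
  have hUd : Differentiable ℝ U := hU.differentiable (by simp)
  have hinf : (∞ : WithTop ℕ∞) ≠ 0 := by simp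
  have hT1 : ContDiff ℝ ∞ (deriv T) := (contDiff_infty_iff_deriv.mp (hT.of_le (by simp))).2
  have hU1 : ContDiff ℝ ∞ (deriv U) := (contDiff_infty_iff_deriv.mp (hU.of_le (by simp))).2
  have hT1d : Differentiable ℝ (deriv T) := hT1.differentiable hinf
  have hU1d : Differentiable ℝ (deriv U) := hU1.differentiable hinf
  have hT2d : Differentiable ℝ (deriv (deriv T)) :=
    ((contDiff_infty_iff_deriv.mp hT1).2).differentiable hinf
  have hU2d : Differentiable ℝ (deriv (deriv U)) :=
    ((contDiff_infty_iff_deriv.mp hU1).2).differentiable hinf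
  have h1 : ∀ y, deriv T y + deriv U y = (T y - U y) * s y := fun y => hBTx y t
  have hspos : ∀ y, 0 < s y := fun y => Real.sqrt_pos.mpr (hpos y t)
  have hS : ∀ y, HasDerivAt s (-(T y - U y)) y := by
    intro y
    have hg : HasDerivAt (fun z => β ^ 2 - 2 * (T z + U z))
        (-(2 * (deriv T y + deriv U y))) y :=
      HasDerivAt.const_sub (β ^ 2)
        (((hTd y).hasDerivAt.add (hUd y).hasDerivAt).const_mul 2)
    have h := hg.sqrt (ne_of_gt (hpos y t))
    have hne : s y ≠ 0 := ne_of_gt (hspos y)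
    convert h using 1
    have hsy : Real.sqrt (β ^ 2 - 2 * (T y + U y)) = s y := rfl
    rw [h1 y, hsy]
    field_simp
  have h2 : ∀ y, deriv (deriv T) y + deriv (deriv U) y =
      (deriv T y - deriv U y) * s y + (T y - U y) * -(T y - U y) := by
    intro y
    have e : (fun z => deriv T z + deriv U z) = fun z => (T z - U z) * s z := funext h1
    have lhs : deriv (fun z => deriv T z + deriv U z) y
        = deriv (deriv T) y + deriv (deriv U) y := deriv_add (hT1d y) (hU1d y)
    have rhs : HasDerivAt (fun z => (T z - U z) * s z)
        ((deriv T y - deriv U y) * s y + (T y - U y) * -(T y - U y)) y :=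
      ((hTd y).hasDerivAt.sub (hUd y).hasDerivAt).mul (hS y)
    rw [← lhs, e, rhs.deriv]
  have h3 : ∀ y, deriv (deriv (deriv T)) y + deriv (deriv (deriv U)) y =
      ((deriv (deriv T) y - deriv (deriv U) y) * s y
        + (deriv T y - deriv U y) * -(T y - U y))
      + ((deriv T y - deriv U y) * -(T y - U y)
        + (T y - U y) * -(deriv T y - deriv U y)) := by
    intro y
    have e : (fun z => deriv (deriv T) z + deriv (deriv U) z)
        = fun z => (deriv T z - deriv U z) * s z + (T z - U z) * -(T z - U z) :=
      funext h2
    have lhs : deriv (fun z => deriv (deriv T) z + deriv (deriv U) z) y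
        = deriv (deriv (deriv T)) y + deriv (deriv (deriv U)) y :=
      deriv_add (hT2d y) (hU2d y)
    have rhs : HasDerivAt
        (fun z => (deriv T z - deriv U z) * s z + (T z - U z) * -(T z - U z))
        (((deriv (deriv T) y - deriv (deriv U) y) * s y
          + (deriv T y - deriv U y) * -(T y - U y))
        + ((deriv T y - deriv U y) * -(T y - U y)
          + (T y - U y) * -(deriv T y - deriv U y))) y :=
      ((((hT1d y).hasDerivAt.sub (hU1d y).hasDerivAt).mul (hS y)).add
        ((((hTd y).hasDerivAt.sub (hUd y).hasDerivAt)).mul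
          (((hTd y).hasDerivAt.sub (hUd y).hasDerivAt).neg)))
    rw [← lhs, e, rhs.deriv]
  have e2 : iteratedDeriv 2 (fun y => tu y t - u y t) x
      = deriv (deriv T) x - deriv (deriv U) x := by
    have ed : deriv (fun y => tu y t - u y t) = fun y => deriv T y - deriv U y := by
      funext y
      exact deriv_sub (hTd y) (hUd y)
    rw [show (2 : ℕ) = 1 + 1 from rfl, iteratedDeriv_succ, iteratedDeriv_one, ed,
      deriv_fun_sub (hT1d x) (hU1d x)]
  have e3T : iteratedDeriv 3 T x = deriv (deriv (deriv T)) x := by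
    rw [show (3 : ℕ) = 1 + 1 + 1 from rfl, iteratedDeriv_succ, iteratedDeriv_succ,
      iteratedDeriv_one]
  have e3U : iteratedDeriv 3 (fun y => u y t) x = deriv (deriv (deriv U)) x := by
    rw [show (3 : ℕ) = 1 + 1 + 1 from rfl, iteratedDeriv_succ, iteratedDeriv_succ,
      iteratedDeriv_one]
  have eBTt := hBTt x t
  have eKdV := hKdV x t
  rw [e2] at eBTt
  rw [e3U] at eKdV
  rw [e3T]
  have hsx : Real.sqrt (β ^ 2 - 2 * (tu x t + u x t)) = s x := rfl
  rw [hsx] at eBTt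
  have hTx : tu x t = T x := rfl
  have hUx : u x t = U x := rfl
  rw [hTx, hUx] at eBTt
  rw [hUx] at eKdV
  rw [hTx]
  have eUl : deriv (fun y => u y t) x = deriv U x := rfl
  rw [eUl] at eKdV
  linear_combination eBTt - eKdV + h3 x + (3 * (T x + U x)) * h1 x
end

section
/- Let u, ũ be smooth real functions satisfying the mKdV Bäcklund relations (ũ_x - u_x) = (ũ + u)·S and (ũ_t - u_t) = -(2(ũ³ + u³) + (ũ + u)_xx)·S with S = √(β² - (ũ - u)²), β² - (ũ-u)² > 0 everywhere. If u solves u_t + u_xxx + 6u²u_x = 0, then ũ solves ũ_t + ũ_xxx + 6ũ²ũ_x = 0. -/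
open scoped ContDiff


/-- The mKdV Bäcklund transformation maps mKdV solutions to mKdV solutions. -/
theorem stmt_8 (β : ℝ) (u tu : ℝ → ℝ → ℝ)
    (hu : ContDiff ℝ (⊤ : ℕ∞) fun p : ℝ × ℝ => u p.1 p.2)
    (htu : ContDiff ℝ (⊤ : ℕ∞) fun p : ℝ × ℝ => tu p.1 p.2)
    (hpos : ∀ x t, 0 < β ^ 2 - (tu x t - u x t) ^ 2)
    (hBTx : ∀ x t, deriv (fun y => tu y t) x - deriv (fun y => u y t) x =
      (tu x t + u x t) * Real.sqrt (β ^ 2 - (tu x t - u x t) ^ 2))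
    (hBTt : ∀ x t, deriv (fun τ => tu x τ) t - deriv (fun τ => u x τ) t =
      -(2 * (tu x t ^ 3 + u x t ^ 3) + iteratedDeriv 2 (fun y => tu y t + u y t) x) *
        Real.sqrt (β ^ 2 - (tu x t - u x t) ^ 2))
    (hmKdV : ∀ x t, deriv (fun τ => u x τ) t + iteratedDeriv 3 (fun y => u y t) x +
      6 * u x t ^ 2 * deriv (fun y => u y t) x = 0) :
    ∀ x t, deriv (fun τ => tu x τ) t + iteratedDeriv 3 (fun y => tu y t) x +
      6 * tu x t ^ 2 * deriv (fun y => tu y t) x = 0 := by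
  intro x t
  have hUc : ContDiff ℝ ∞ (fun y : ℝ => u y t) := (hu.of_le (by simp)).comp (contDiff_id.prodMk contDiff_const)
  have hTc : ContDiff ℝ ∞ (fun y : ℝ => tu y t) := (htu.of_le (by simp)).comp (contDiff_id.prodMk contDiff_const)
  have hWc : ContDiff ℝ ∞ (fun y : ℝ => tu y t + u y t) := hTc.add hUc
  have hUd : Differentiable ℝ (fun y : ℝ => u y t) := hUc.differentiable (by norm_num)
  have hTd : Differentiable ℝ (fun y : ℝ => tu y t) := hTc.differentiable (by norm_num)
  have hU'c : ContDiff ℝ ∞ (deriv (fun y : ℝ => u y t)) := (contDiff_infty_iff_deriv.mp hUc).2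
  have hT'c : ContDiff ℝ ∞ (deriv (fun y : ℝ => tu y t)) := (contDiff_infty_iff_deriv.mp hTc).2
  have hW'c : ContDiff ℝ ∞ (deriv (fun y : ℝ => tu y t + u y t)) :=
    (contDiff_infty_iff_deriv.mp hWc).2
  have hSpos : ∀ y : ℝ, 0 < Real.sqrt (β ^ 2 - (tu y t - u y t) ^ 2) := fun y =>
    Real.sqrt_pos.mpr (hpos y t)
  -- first derivative of the difference
  have hD1 : ∀ y : ℝ, HasDerivAt (fun z => tu z t - u z t)
      ((tu y t + u y t) * Real.sqrt (β ^ 2 - (tu y t - u y t) ^ 2)) y := by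
    intro y
    have h := ((hTd y).hasDerivAt).sub ((hUd y).hasDerivAt)
    rwa [hBTx y t] at h
  -- derivative of S
  have hS1 : ∀ y : ℝ, HasDerivAt (fun z => Real.sqrt (β ^ 2 - (tu z t - u z t) ^ 2))
      (-((tu y t - u y t) * (tu y t + u y t))) y := by
    intro y
    have hg : HasDerivAt (fun z => β ^ 2 - (tu z t - u z t) ^ 2)
        (0 - ((2 : ℕ) * (tu y t - u y t) ^ (2 - 1) *
          ((tu y t + u y t) * Real.sqrt (β ^ 2 - (tu y t - u y t) ^ 2)))) y :=
      (hasDerivAt_const y (β ^ 2)).sub ((hD1 y).pow 2)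
    have hne : (β ^ 2 - (tu y t - u y t) ^ 2) ≠ 0 := (hpos y t).ne'
    have hc := (Real.hasDerivAt_sqrt hne).comp y hg
    have hSy := hSpos y
    have hSne : Real.sqrt (β ^ 2 - (tu y t - u y t) ^ 2) ≠ 0 := hSy.ne'
    refine hc.congr_deriv ?_
    push_cast
    field_simp
    ring
  have hderivD : deriv (fun z => tu z t - u z t) =
      fun y => (tu y t + u y t) * Real.sqrt (β ^ 2 - (tu y t - u y t) ^ 2) :=
    funext fun y => (hD1 y).deriv
  have hW1 : ∀ y : ℝ, HasDerivAt (fun z => tu z t + u z t)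
      (deriv (fun z => tu z t + u z t) y) y := fun y =>
    ((hWc.differentiable (by norm_num)) y).hasDerivAt
  -- second derivative of the difference
  have hD2 : ∀ y : ℝ, HasDerivAt (deriv (fun z => tu z t - u z t))
      (deriv (fun z => tu z t + u z t) y * Real.sqrt (β ^ 2 - (tu y t - u y t) ^ 2)
        - (tu y t + u y t) ^ 2 * (tu y t - u y t)) y := by
    intro y
    rw [hderivD]
    have h := (hW1 y).mul (hS1 y)
    refine h.congr_deriv ?_
    ring
  have hderivD2 : deriv (deriv (fun z => tu z t - u z t)) =
      fun y => deriv (fun z => tu z t + u z t) y * Real.sqrt (β ^ 2 - (tu y t - u y t) ^ 2)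
        - (tu y t + u y t) ^ 2 * (tu y t - u y t) := funext fun y => (hD2 y).deriv
  have hW2 : ∀ y : ℝ, HasDerivAt (deriv (fun z => tu z t + u z t))
      (deriv (deriv (fun z => tu z t + u z t)) y) y := fun y =>
    ((hW'c.differentiable (by norm_num)) y).hasDerivAt
  -- third derivative of the difference
  have hD3 : HasDerivAt (deriv (deriv (fun z => tu z t - u z t)))
      ((deriv (deriv (fun z => tu z t + u z t)) x - (tu x t + u x t) ^ 3) *
          Real.sqrt (β ^ 2 - (tu x t - u x t) ^ 2)
        - 3 * (tu x t + u x t) * deriv (fun z => tu z t + u z t) x * (tu x t - u x t)) x := by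
    rw [hderivD2]
    have h := ((hW2 x).mul (hS1 x)).sub ((((hW1 x).pow 2)).mul (hD1 x))
    refine h.congr_deriv ?_
    push_cast
    simp only [Pi.pow_apply]
    ring
  -- identify iterated derivatives of tu - u with differences of iterated derivatives
  have hT'd : Differentiable ℝ (deriv (fun z : ℝ => tu z t)) := hT'c.differentiable (by norm_num)
  have hU'd : Differentiable ℝ (deriv (fun z : ℝ => u z t)) := hU'c.differentiable (by norm_num)
  have hT''d : Differentiable ℝ (deriv (deriv (fun z : ℝ => tu z t))) :=
    ((contDiff_infty_iff_deriv.mp hT'c).2).differentiable (by norm_num)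
  have hU''d : Differentiable ℝ (deriv (deriv (fun z : ℝ => u z t))) :=
    ((contDiff_infty_iff_deriv.mp hU'c).2).differentiable (by norm_num)
  have hd1 : deriv (fun z => tu z t - u z t) =
      fun y => deriv (fun z => tu z t) y - deriv (fun z => u z t) y :=
    funext fun y => (((hTd y).hasDerivAt).sub ((hUd y).hasDerivAt)).deriv
  have hd2 : deriv (deriv (fun z => tu z t - u z t)) =
      fun y => deriv (deriv (fun z => tu z t)) y - deriv (deriv (fun z => u z t)) y := by
    rw [hd1]
    exact funext fun y => (((hT'd y).hasDerivAt).sub ((hU'd y).hasDerivAt)).deriv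
  have hd3 : HasDerivAt (deriv (deriv (fun z => tu z t - u z t)))
      (deriv (deriv (deriv (fun z => tu z t))) x - deriv (deriv (deriv (fun z => u z t))) x) x := by
    rw [hd2]
    exact ((hT''d x).hasDerivAt).sub ((hU''d x).hasDerivAt)
  have key3 : deriv (deriv (deriv (fun z => tu z t))) x
        - deriv (deriv (deriv (fun z => u z t))) x =
      (deriv (deriv (fun z => tu z t + u z t)) x - (tu x t + u x t) ^ 3) *
          Real.sqrt (β ^ 2 - (tu x t - u x t) ^ 2)
        - 3 * (tu x t + u x t) * deriv (fun z => tu z t + u z t) x * (tu x t - u x t) :=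
    hd3.unique hD3
  have h5 : deriv (fun z => tu z t + u z t) x =
      deriv (fun z => tu z t) x + deriv (fun z => u z t) x :=
    (((hTd x).hasDerivAt).add ((hUd x).hasDerivAt)).deriv
  have hB := hBTt x t
  have hA := hBTx x t
  have hC := hmKdV x t
  simp only [iteratedDeriv_succ, iteratedDeriv_zero] at hB hC ⊢
  linear_combination hB + hC + key3 +
    (3 * (tu x t ^ 2 + u x t ^ 2)) * hA -
    (3 * (tu x t ^ 2 - u x t ^ 2)) * h5
end

section
/- Let B(x,t,λ) be a 2×2 matrix-valued differentiable function satisfying B_t = ṼB - BV, let Γ satisfy Γ_t = V₂₁ - 2V₁₁Γ - V₁₂Γ², define Γ̃ = (B₂₁ + B₂₂Γ)/(B₁₁ + B₁₂Γ) (assuming B₁₁ + B₁₂Γ ≠ 0). If V and Ṽ are traceless 2×2 matrices (with entries V₁₁, V₁₂, V₂₁, -V₁₁ and similarly for Ṽ), then Ṽ₁₁ + Ṽ₁₂Γ̃ - V₁₁ - V₁₂Γ = (B₁₁ + B₁₂Γ)_t / (B₁₁ + B₁₂Γ). -/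
/-- The jump of the flux generating function across the defect is the logarithmic
t-derivative of `B₁₁ + B₁₂Γ`, given the t-part Darboux relation and the t-Riccati equation. -/
theorem stmt_10 (B11 B12 B21 B22 V11 V12 V21 tV11 tV12 tV21 Γ : ℝ → ℝ → ℂ)
    (hden : ∀ x t, B11 x t + B12 x t * Γ x t ≠ 0)
    (hΓt : ∀ x t, HasDerivAt (fun τ => Γ x τ)
      (V21 x t - 2 * V11 x t * Γ x t - V12 x t * Γ x t ^ 2) t)
    (hB11t : ∀ x t, HasDerivAt (fun τ => B11 x τ)
      (tV11 x t * B11 x t + tV12 x t * B21 x t -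
        (B11 x t * V11 x t + B12 x t * V21 x t)) t)
    (hB12t : ∀ x t, HasDerivAt (fun τ => B12 x τ)
      (tV11 x t * B12 x t + tV12 x t * B22 x t -
        (B11 x t * V12 x t - B12 x t * V11 x t)) t)
    (hB21t : ∀ x t, HasDerivAt (fun τ => B21 x τ)
      (tV21 x t * B11 x t - tV11 x t * B21 x t -
        (B21 x t * V11 x t + B22 x t * V21 x t)) t)
    (hB22t : ∀ x t, HasDerivAt (fun τ => B22 x τ)
      (tV21 x t * B12 x t - tV11 x t * B22 x t -
        (B21 x t * V12 x t - B22 x t * V11 x t)) t) :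
    ∀ x t,
      tV11 x t + tV12 x t *
          ((B21 x t + B22 x t * Γ x t) / (B11 x t + B12 x t * Γ x t)) -
        V11 x t - V12 x t * Γ x t =
      deriv (fun τ => B11 x τ + B12 x τ * Γ x τ) t / (B11 x t + B12 x t * Γ x t) := by
  intro x t
  have hd : HasDerivAt (fun τ => B11 x τ + B12 x τ * Γ x τ)
      ((tV11 x t * B11 x t + tV12 x t * B21 x t -
        (B11 x t * V11 x t + B12 x t * V21 x t)) +
       ((tV11 x t * B12 x t + tV12 x t * B22 x t -
        (B11 x t * V12 x t - B12 x t * V11 x t)) * Γ x t +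
        B12 x t * (V21 x t - 2 * V11 x t * Γ x t - V12 x t * Γ x t ^ 2))) t :=
    (hB11t x t).add ((hB12t x t).mul (hΓt x t))
  rw [hd.deriv]
  have h := hden x t
  rw [eq_div_iff h]
  have hq := div_mul_cancel₀ (B21 x t + B22 x t * Γ x t) h
  linear_combination tV12 x t * hq
end

section
/- Let B(x,t,λ) satisfy B_x = ŨB - BU with U = [[-iλ, u],[v, iλ]] and Ũ = [[-iλ, ũ],[ṽ, iλ]], let Γ satisfy Γ_x = 2iλΓ + v - uΓ², and define Γ̃ = (B₂₁ + B₂₂Γ)/(B₁₁ + B₁₂Γ) (assuming the denominator is nonvanishing). Then ũΓ̃ - uΓ = (B₁₁ + B₁₂Γ)_x / (B₁₁ + B₁₂Γ). -/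
/-- The jump of the conserved density generating function across the defect is the
logarithmic x-derivative of `B₁₁ + B₁₂Γ`, given the x-part Darboux relation and
the x-Riccati equation. -/
theorem stmt_11 (lam : ℂ) (u v tu tv B11 B12 B21 B22 Γ : ℝ → ℝ → ℂ)
    (hden : ∀ x t, B11 x t + B12 x t * Γ x t ≠ 0)
    (hΓx : ∀ x t, HasDerivAt (fun y => Γ y t)
      (2 * Complex.I * lam * Γ x t + v x t - u x t * Γ x t ^ 2) x)
    (hB11x : ∀ x t, HasDerivAt (fun y => B11 y t)
      ((-Complex.I * lam * B11 x t + tu x t * B21 x t) -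
        (B11 x t * (-Complex.I * lam) + B12 x t * v x t)) x)
    (hB12x : ∀ x t, HasDerivAt (fun y => B12 y t)
      ((-Complex.I * lam * B12 x t + tu x t * B22 x t) -
        (B11 x t * u x t + B12 x t * (Complex.I * lam))) x)
    (hB21x : ∀ x t, HasDerivAt (fun y => B21 y t)
      ((tv x t * B11 x t + Complex.I * lam * B21 x t) -
        (B21 x t * (-Complex.I * lam) + B22 x t * v x t)) x)
    (hB22x : ∀ x t, HasDerivAt (fun y => B22 y t)
      ((tv x t * B12 x t + Complex.I * lam * B22 x t) -
        (B21 x t * u x t + B22 x t * (Complex.I * lam))) x) :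
    ∀ x t,
      tu x t * ((B21 x t + B22 x t * Γ x t) / (B11 x t + B12 x t * Γ x t)) -
        u x t * Γ x t =
      deriv (fun y => B11 y t + B12 y t * Γ y t) x / (B11 x t + B12 x t * Γ x t) := by
  intro x t
  have hd : HasDerivAt (fun y => B11 y t + B12 y t * Γ y t) _ x :=
    ((hB11x x t).add ((hB12x x t).mul (hΓx x t)))
  rw [hd.deriv]
  rw [← mul_div_assoc, eq_div_iff (hden x t), sub_mul,
    div_mul_cancel₀ _ (hden x t)]
  ring
end

section
/- Let q, q̃ be smooth real functions satisfying the mKdV potential Bäcklund relations q̃_x + q_x = β·sin(q̃ - q) and q̃_t + q_t = -β[(q̃_xx - q_xx)·cos(q̃ - q) + (q̃_x² + q_x²)·sin(q̃ - q)], where β is a real constant. If q solves the potential mKdV equation q_t + q_xxx + 2(q_x)³ = 0, then q̃ solves q̃_t + q̃_xxx + 2(q̃_x)³ = 0. -/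
open Real

private lemma aux_step1 (β : ℝ) (T Q : ℝ → ℝ) (hT : ContDiff ℝ ((⊤ : ℕ∞) : WithTop ℕ∞) T) (hQ : ContDiff ℝ ((⊤ : ℕ∞) : WithTop ℕ∞) Q)
    (h : ∀ x, deriv T x + deriv Q x = β * Real.sin (T x - Q x)) :
    ∀ x, deriv (deriv T) x + deriv (deriv Q) x =
      β * (Real.cos (T x - Q x) * (deriv T x - deriv Q x)) := by
  intro x
  have hT' : ContDiff ℝ ((⊤ : ℕ∞) : WithTop ℕ∞) (deriv T) := (contDiff_infty_iff_deriv.mp hT).2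
  have hQ' : ContDiff ℝ ((⊤ : ℕ∞) : WithTop ℕ∞) (deriv Q) := (contDiff_infty_iff_deriv.mp hQ).2
  have h1 : HasDerivAt (fun y => deriv T y + deriv Q y)
      (deriv (deriv T) x + deriv (deriv Q) x) x :=
    ((hT'.differentiable (by simp) x).hasDerivAt).add ((hQ'.differentiable (by simp) x).hasDerivAt)
  have h2 : HasDerivAt (fun y => β * Real.sin (T y - Q y))
      (β * (Real.cos (T x - Q x) * (deriv T x - deriv Q x))) x := by
    have hw : HasDerivAt (fun y => T y - Q y) (deriv T x - deriv Q x) x :=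
      ((hT.differentiable (by simp) x).hasDerivAt).sub ((hQ.differentiable (by simp) x).hasDerivAt)
    exact ((Real.hasDerivAt_sin (T x - Q x)).comp x hw).const_mul β
  have heq : (fun y => deriv T y + deriv Q y) = (fun y => β * Real.sin (T y - Q y)) :=
    funext h
  rw [heq] at h1
  exact h1.unique h2

private lemma aux_step2 (β : ℝ) (T Q : ℝ → ℝ) (hT : ContDiff ℝ ((⊤ : ℕ∞) : WithTop ℕ∞) T) (hQ : ContDiff ℝ ((⊤ : ℕ∞) : WithTop ℕ∞) Q)
    (h : ∀ x, deriv (deriv T) x + deriv (deriv Q) x =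
      β * (Real.cos (T x - Q x) * (deriv T x - deriv Q x))) :
    ∀ x, deriv (deriv (deriv T)) x + deriv (deriv (deriv Q)) x =
      β * (-Real.sin (T x - Q x) * (deriv T x - deriv Q x) ^ 2 +
        Real.cos (T x - Q x) * (deriv (deriv T) x - deriv (deriv Q) x)) := by
  intro x
  have hT' : ContDiff ℝ ((⊤ : ℕ∞) : WithTop ℕ∞) (deriv T) := (contDiff_infty_iff_deriv.mp hT).2
  have hQ' : ContDiff ℝ ((⊤ : ℕ∞) : WithTop ℕ∞) (deriv Q) := (contDiff_infty_iff_deriv.mp hQ).2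
  have hT'' : ContDiff ℝ ((⊤ : ℕ∞) : WithTop ℕ∞) (deriv (deriv T)) := (contDiff_infty_iff_deriv.mp hT').2
  have hQ'' : ContDiff ℝ ((⊤ : ℕ∞) : WithTop ℕ∞) (deriv (deriv Q)) := (contDiff_infty_iff_deriv.mp hQ').2
  have h1 : HasDerivAt (fun y => deriv (deriv T) y + deriv (deriv Q) y)
      (deriv (deriv (deriv T)) x + deriv (deriv (deriv Q)) x) x :=
    ((hT''.differentiable (by simp) x).hasDerivAt).add ((hQ''.differentiable (by simp) x).hasDerivAt)
  have hw : HasDerivAt (fun y => T y - Q y) (deriv T x - deriv Q x) x :=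
    ((hT.differentiable (by simp) x).hasDerivAt).sub ((hQ.differentiable (by simp) x).hasDerivAt)
  have hw' : HasDerivAt (fun y => deriv T y - deriv Q y)
      (deriv (deriv T) x - deriv (deriv Q) x) x :=
    ((hT'.differentiable (by simp) x).hasDerivAt).sub ((hQ'.differentiable (by simp) x).hasDerivAt)
  have hcos : HasDerivAt (fun y => Real.cos (T y - Q y))
      (-Real.sin (T x - Q x) * (deriv T x - deriv Q x)) x :=
    by have := (Real.hasDerivAt_cos (T x - Q x)).comp x hw; exact this
  have h2 : HasDerivAt (fun y => β * (Real.cos (T y - Q y) * (deriv T y - deriv Q y)))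
      (β * (-Real.sin (T x - Q x) * (deriv T x - deriv Q x) ^ 2 +
        Real.cos (T x - Q x) * (deriv (deriv T) x - deriv (deriv Q) x))) x := by
    have : HasDerivAt (fun y => β * (Real.cos (T y - Q y) * (deriv T y - deriv Q y)))
        (β * (-Real.sin (T x - Q x) * (deriv T x - deriv Q x) * (deriv T x - deriv Q x) +
          Real.cos (T x - Q x) * (deriv (deriv T) x - deriv (deriv Q) x))) x :=
      (hcos.mul hw').const_mul β
    convert this using 1
    ring
  have heq : (fun y => deriv (deriv T) y + deriv (deriv Q) y)
      = (fun y => β * (Real.cos (T y - Q y) * (deriv T y - deriv Q y))) := funext h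
  rw [heq] at h1
  exact h1.unique h2

/-- The potential mKdV Bäcklund transformation maps potential-mKdV solutions to
potential-mKdV solutions. -/
theorem stmt_16 (β : ℝ) (q tq : ℝ → ℝ → ℝ)
    (hq : ContDiff ℝ (⊤ : ℕ∞) fun p : ℝ × ℝ => q p.1 p.2)
    (htq : ContDiff ℝ (⊤ : ℕ∞) fun p : ℝ × ℝ => tq p.1 p.2)
    (hBTx : ∀ x t, deriv (fun y => tq y t) x + deriv (fun y => q y t) x =
      β * Real.sin (tq x t - q x t))
    (hBTt : ∀ x t, deriv (fun τ => tq x τ) t + deriv (fun τ => q x τ) t =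
      -β * ((iteratedDeriv 2 (fun y => tq y t) x - iteratedDeriv 2 (fun y => q y t) x) *
          Real.cos (tq x t - q x t) +
        ((deriv (fun y => tq y t) x) ^ 2 + (deriv (fun y => q y t) x) ^ 2) *
          Real.sin (tq x t - q x t)))
    (hpmKdV : ∀ x t, deriv (fun τ => q x τ) t + iteratedDeriv 3 (fun y => q y t) x +
      2 * (deriv (fun y => q y t) x) ^ 3 = 0) :
    ∀ x t, deriv (fun τ => tq x τ) t + iteratedDeriv 3 (fun y => tq y t) x +
      2 * (deriv (fun y => tq y t) x) ^ 3 = 0 := by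
  intro x t
  set T : ℝ → ℝ := fun y => tq y t with hTdef
  set Q : ℝ → ℝ := fun y => q y t with hQdef
  have hT : ContDiff ℝ ((⊤ : ℕ∞) : WithTop ℕ∞) T := (htq.of_le (by simp)).comp (contDiff_id.prodMk contDiff_const)
  have hQ : ContDiff ℝ ((⊤ : ℕ∞) : WithTop ℕ∞) Q := (hq.of_le (by simp)).comp (contDiff_id.prodMk contDiff_const)
  have h1 := aux_step1 β T Q hT hQ (fun y => hBTx y t)
  have h2 := aux_step2 β T Q hT hQ h1
  have hi2T : iteratedDeriv 2 T = deriv (deriv T) := by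
    simp [iteratedDeriv_succ, iteratedDeriv_zero]
  have hi2Q : iteratedDeriv 2 Q = deriv (deriv Q) := by
    simp [iteratedDeriv_succ, iteratedDeriv_zero]
  have hi3T : iteratedDeriv 3 T = deriv (deriv (deriv T)) := by
    simp [iteratedDeriv_succ, iteratedDeriv_zero]
  have hi3Q : iteratedDeriv 3 Q = deriv (deriv (deriv Q)) := by
    simp [iteratedDeriv_succ, iteratedDeriv_zero]
  have hbt := hBTt x t
  have hpk := hpmKdV x t
  rw [hi2T, hi2Q] at hbt
  rw [hi3Q] at hpk
  rw [hi3T]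
  have hs := hBTx x t
  have h2x := h2 x
  -- algebra
  set u := deriv Q x
  set v := deriv T x
  set s := Real.sin (tq x t - q x t)
  set c := Real.cos (tq x t - q x t)
  linear_combination hbt - hpk + h2x + (2*v^2 - 2*u*v + 2*u^2) * hs
end

section
/- Let N ≥ 0 be an integer, γ > 0, k > 0, and define u on ℝ by the piecewise formula: u(ξ) = 2k²sech²(|ξ + Nγ| + γ) for ξ ≤ -(N-1)γ; u(ξ) = 2k²sech²(|ξ + (N-2j)γ| + γ) for (2j-1-N)γ < ξ ≤ (2j+1-N)γ, j = 1,…,N; u(ξ) = 2k²sech²(|ξ - Nγ| + γ) for ξ > (N+1)γ. Then u is well-defined and continuous on ℝ (the piecewise formulas agree at the boundary points ξ = (2j-1-N)γ and ξ = (2j+1-N)γ), and u attains local maxima 2k²sech²(γ) exactly at the N+1 points ξ = (2m-N)γ, m = 0,…,N. -/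
noncomputable section KdVPeakonAux

/-- peak locations -/
def kdvPk (N : ℕ) (γ : ℝ) (j : ℕ) : ℝ := (2*(j:ℝ) - (N:ℝ))*γ

/-- distance to nearest peak -/
def kdvD (N : ℕ) (γ : ℝ) (ξ : ℝ) : ℝ :=
  (Finset.range (N+1)).inf' (by simp) (fun j => |ξ - kdvPk N γ j|)

/-- the profile function -/
def kdvF (k γ : ℝ) (t : ℝ) : ℝ :=
  2 * k ^ 2 * (2 / (Real.exp (t + γ) + Real.exp (-(t + γ)))) ^ 2

lemma kdvD_nonneg (N : ℕ) (γ ξ : ℝ) : 0 ≤ kdvD N γ ξ := by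
  apply Finset.le_inf'
  intro j _; exact abs_nonneg _

lemma kdvD_le (N : ℕ) (γ ξ : ℝ) {j : ℕ} (hj : j ≤ N) :
    kdvD N γ ξ ≤ |ξ - kdvPk N γ j| :=
  Finset.inf'_le _ (Finset.mem_range.2 (Nat.lt_succ_of_le hj))

lemma kdvD_eq (N : ℕ) (γ ξ : ℝ) {j : ℕ} (hj : j ≤ N)
    (h : ∀ i, i ≤ N → |ξ - kdvPk N γ j| ≤ |ξ - kdvPk N γ i|) :
    kdvD N γ ξ = |ξ - kdvPk N γ j| := by
  refine le_antisymm (kdvD_le N γ ξ hj) ?_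
  apply Finset.le_inf'
  intro i hi
  exact h i (Nat.lt_succ_iff.1 (Finset.mem_range.1 hi))

lemma kdvD_continuous (N : ℕ) (γ : ℝ) : Continuous (kdvD N γ) := by
  rw [continuous_iff_continuousAt]
  intro x
  apply ContinuousAt.finset_inf'_apply
  intro i _
  exact ((continuous_id.sub continuous_const).abs).continuousAt

lemma kdvF_cont (k γ : ℝ) : Continuous (kdvF k γ) := by
  apply Continuous.mul continuous_const
  apply Continuous.pow
  apply Continuous.div continuous_const
  · exact ((Real.continuous_exp.comp (continuous_id.add continuous_const))).add
      (Real.continuous_exp.comp (continuous_id.add continuous_const).neg)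
  · intro x
    positivity

lemma kdvF_strictAnti (k γ : ℝ) (hk : 0 < k) (hγ : 0 < γ) {a b : ℝ}
    (ha : 0 ≤ a) (hab : a < b) : kdvF k γ b < kdvF k γ a := by
  unfold kdvF
  set x := a + γ with hx
  set y := b + γ with hy
  have hx0 : 0 < x := by positivity
  have hxy : x < y := by simp [hx, hy]; linarith
  have h1 : Real.exp x + Real.exp (-x) < Real.exp y + Real.exp (-y) := by
    have e1 : Real.exp x < Real.exp y := Real.exp_lt_exp.2 hxy
    have e2 : Real.exp (-(x+y)) < 1 := by
      rw [Real.exp_lt_one_iff]; linarith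
    have key : (Real.exp y - Real.exp x) * (1 - Real.exp (-(x+y))) > 0 :=
      mul_pos (by linarith) (by linarith)
    have expand : (Real.exp y - Real.exp x) * (1 - Real.exp (-(x+y)))
        = (Real.exp y + Real.exp (-y)) - (Real.exp x + Real.exp (-x)) := by
      have hxx : Real.exp (-(x+y)) * Real.exp y = Real.exp (-x) := by
        rw [← Real.exp_add]; ring_nf
      have hyy : Real.exp (-(x+y)) * Real.exp x = Real.exp (-y) := by
        rw [← Real.exp_add]; ring_nf
      nlinarith [hxx, hyy]
    linarith
  have hxpos : 0 < Real.exp x + Real.exp (-x) := by positivity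
  have hypos : 0 < Real.exp y + Real.exp (-y) := by positivity
  have h2 : 2 / (Real.exp y + Real.exp (-y)) < 2 / (Real.exp x + Real.exp (-x)) := by
    apply div_lt_div_of_pos_left (by norm_num) hxpos h1
  have h3 : 0 < 2 / (Real.exp y + Real.exp (-y)) := by positivity
  have hk2 : 0 < 2 * k ^ 2 := by positivity
  apply mul_lt_mul_of_pos_left _ hk2
  exact pow_lt_pow_left₀ h2 h3.le (by norm_num)

end KdVPeakonAux

section KdVCases
variable {N : ℕ} {γ ξ : ℝ}

lemma kdvPk_mono (hγ : 0 < γ) {i i' : ℕ} (h : i ≤ i') : kdvPk N γ i ≤ kdvPk N γ i' := by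
  unfold kdvPk
  have : (i:ℝ) ≤ (i':ℝ) := Nat.cast_le.2 h
  nlinarith

lemma kdvPk_gap (hγ : 0 < γ) {i j : ℕ} (h : i ≠ j) :
    2 * γ ≤ |kdvPk N γ i - kdvPk N γ j| := by
  unfold kdvPk
  have h1 : kdvPk N γ i - kdvPk N γ j = 2*((i:ℝ) - (j:ℝ))*γ := by unfold kdvPk; ring
  rcases lt_or_gt_of_ne h with hlt | hgt
  · have : (i:ℝ) + 1 ≤ (j:ℝ) := by exact_mod_cast Nat.succ_le_of_lt hlt
    rw [show (2*(i:ℝ) - N)*γ - ((2*(j:ℝ) - N)*γ) = 2*((i:ℝ)-(j:ℝ))*γ by ring]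
    rw [abs_of_nonpos (by nlinarith)]
    nlinarith
  · have : (j:ℝ) + 1 ≤ (i:ℝ) := by exact_mod_cast Nat.succ_le_of_lt hgt
    rw [show (2*(i:ℝ) - N)*γ - ((2*(j:ℝ) - N)*γ) = 2*((i:ℝ)-(j:ℝ))*γ by ring]
    rw [abs_of_nonneg (by nlinarith)]
    nlinarith

lemma kdvD_eq_of_close (hγ : 0 < γ) {j : ℕ} (hj : j ≤ N)
    (h : |ξ - kdvPk N γ j| ≤ γ) : kdvD N γ ξ = |ξ - kdvPk N γ j| := by
  apply kdvD_eq N γ ξ hj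
  intro i hi
  by_cases hij : i = j
  · subst hij; rfl
  · have gap := kdvPk_gap (N := N) hγ hij
    have tri : |kdvPk N γ i - kdvPk N γ j| ≤ |ξ - kdvPk N γ j| + |ξ - kdvPk N γ i| := by
      calc |kdvPk N γ i - kdvPk N γ j| = |(ξ - kdvPk N γ j) - (ξ - kdvPk N γ i)| := by
              ring_nf
          _ ≤ |ξ - kdvPk N γ j| + |ξ - kdvPk N γ i| := abs_sub _ _
    linarith

lemma kdvD_eq_left (hγ : 0 < γ) (h : ξ ≤ kdvPk N γ 0) :
    kdvD N γ ξ = |ξ - kdvPk N γ 0| := by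
  apply kdvD_eq N γ ξ (Nat.zero_le N)
  intro i _
  have := kdvPk_mono (N := N) hγ (Nat.zero_le i)
  rw [abs_of_nonpos (by linarith), abs_of_nonpos (by linarith)]
  linarith

lemma kdvD_eq_right (hγ : 0 < γ) (h : kdvPk N γ N ≤ ξ) :
    kdvD N γ ξ = |ξ - kdvPk N γ N| := by
  apply kdvD_eq N γ ξ le_rfl
  intro i hi
  have := kdvPk_mono (N := N) hγ hi
  rw [abs_of_nonneg (by linarith), abs_of_nonneg (by linarith)]
  linarith

end KdVCases

/-- The multi-peakon profile of the defect KdV equation with `2N+1` defects is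
continuous and attains its local maxima `2k² sech²(γ)` exactly at the `N+1`
points `ξ = (2m - N)γ`, `m = 0, …, N`. -/
theorem stmt_17 (N : ℕ) (k γ : ℝ) (hk : 0 < k) (hγ : 0 < γ)
    (sech : ℝ → ℝ) (hsech : ∀ y, sech y = 2 / (Real.exp y + Real.exp (-y)))
    (u : ℝ → ℝ)
    (h1 : ∀ ξ : ℝ, ξ ≤ -((N : ℝ) - 1) * γ →
      u ξ = 2 * k ^ 2 * (sech (|ξ + (N : ℝ) * γ| + γ)) ^ 2)
    (h2 : ∀ j : ℕ, 1 ≤ j → j ≤ N → ∀ ξ : ℝ,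
      (2 * (j : ℝ) - 1 - (N : ℝ)) * γ < ξ → ξ ≤ (2 * (j : ℝ) + 1 - (N : ℝ)) * γ →
      u ξ = 2 * k ^ 2 * (sech (|ξ + ((N : ℝ) - 2 * (j : ℝ)) * γ| + γ)) ^ 2)
    (h3 : ∀ ξ : ℝ, ((N : ℝ) + 1) * γ < ξ →
      u ξ = 2 * k ^ 2 * (sech (|ξ - (N : ℝ) * γ| + γ)) ^ 2) :
    Continuous u ∧
    (∀ m : ℕ, m ≤ N →
      IsLocalMax u ((2 * (m : ℝ) - (N : ℝ)) * γ) ∧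
      u ((2 * (m : ℝ) - (N : ℝ)) * γ) = 2 * k ^ 2 * (sech γ) ^ 2) ∧
    (∀ ξ : ℝ, IsLocalMax u ξ → ∃ m : ℕ, m ≤ N ∧ ξ = (2 * (m : ℝ) - (N : ℝ)) * γ) := by
  -- The global formula: u ξ = kdvF k γ (kdvD N γ ξ)
  have hpk0 : kdvPk N γ 0 = -(N : ℝ) * γ := by unfold kdvPk; push_cast; ring
  have hpkN : kdvPk N γ N = (N : ℝ) * γ := by unfold kdvPk; push_cast; ring
  have key : ∀ ξ : ℝ, u ξ = kdvF k γ (kdvD N γ ξ) := by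
    intro ξ
    rcases le_or_gt ξ (-((N : ℝ) - 1) * γ) with hc1 | hc1
    · rw [h1 ξ hc1, hsech]
      have hd : kdvD N γ ξ = |ξ - kdvPk N γ 0| := by
        rcases le_or_gt ξ (kdvPk N γ 0) with h' | h'
        · exact kdvD_eq_left hγ h'
        · apply kdvD_eq_of_close hγ (Nat.zero_le N)
          rw [abs_le]
          rw [hpk0] at h' ⊢
          constructor <;> linarith
      rw [hd, hpk0]
      have : ξ - -(N : ℝ) * γ = ξ + (N : ℝ) * γ := by ring
      rw [this, kdvF]
    · rcases le_or_gt ξ (((N : ℝ) + 1) * γ) with hc2 | hc2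
      · -- middle region: locate the piece
        set x : ℝ := (ξ / γ + (N : ℝ) - 1) / 2 with hxdef
        have hx0 : 0 < x := by
          have : (1 - (N : ℝ)) * γ < ξ := by linarith
          have hdiv : 1 - (N : ℝ) < ξ / γ := by
            rw [lt_div_iff₀ hγ]; linarith
          simp only [hxdef]; linarith
        have hxN : x ≤ (N : ℝ) := by
          have hdiv : ξ / γ ≤ (N : ℝ) + 1 := by
            rw [div_le_iff₀ hγ]; linarith
          simp only [hxdef]; linarith
        set j : ℤ := ⌈x⌉ with hjdef
        have hj1 : 1 ≤ j := Int.ceil_pos.2 hx0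
        have hjN : j ≤ (N : ℤ) := by
          rw [hjdef, Int.ceil_le]; exact_mod_cast hxN
        set m : ℕ := j.toNat with hmdef
        have hmj : (m : ℤ) = j := Int.toNat_of_nonneg (by linarith)
        have hmjR : (m : ℝ) = (j : ℝ) := by exact_mod_cast congrArg (Int.cast : ℤ → ℝ) hmj
        have hm1 : 1 ≤ m := by omega
        have hmN : m ≤ N := by omega
        have hub : x ≤ (j : ℝ) := Int.le_ceil x
        have hlb : (j : ℝ) - 1 < x := by
          have := Int.ceil_lt_add_one x
          rw [← hjdef] at this; linarith
        have hlow : (2 * (m : ℝ) - 1 - (N : ℝ)) * γ < ξ := by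
          have : 2 * (m : ℝ) - 1 - (N : ℝ) < ξ / γ := by
            rw [hmjR]; simp only [hxdef] at hlb; linarith
          calc (2 * (m : ℝ) - 1 - (N : ℝ)) * γ < (ξ / γ) * γ := by
                exact mul_lt_mul_of_pos_right this hγ
            _ = ξ := by field_simp
        have hhigh : ξ ≤ (2 * (m : ℝ) + 1 - (N : ℝ)) * γ := by
          have : ξ / γ ≤ 2 * (m : ℝ) + 1 - (N : ℝ) := by
            rw [hmjR]; simp only [hxdef] at hub; linarith
          calc ξ = (ξ / γ) * γ := by field_simp
            _ ≤ (2 * (m : ℝ) + 1 - (N : ℝ)) * γ := mul_le_mul_of_nonneg_right this hγ.le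
        rw [h2 m hm1 hmN ξ hlow hhigh, hsech]
        have hd : kdvD N γ ξ = |ξ - kdvPk N γ m| := by
          apply kdvD_eq_of_close hγ hmN
          rw [abs_le]
          unfold kdvPk
          constructor <;> nlinarith
        rw [hd]
        have : ξ + ((N : ℝ) - 2 * (m : ℝ)) * γ = ξ - kdvPk N γ m := by
          unfold kdvPk; ring
        rw [this, kdvF]
      · rw [h3 ξ hc2, hsech]
        have hd : kdvD N γ ξ = |ξ - kdvPk N γ N| := by
          apply kdvD_eq_right hγ
          rw [hpkN]; nlinarith
        rw [hd, hpkN, kdvF]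
  -- weak antitonicity
  have Fanti : ∀ a b : ℝ, 0 ≤ a → a ≤ b → kdvF k γ b ≤ kdvF k γ a := by
    intro a b ha hab
    rcases eq_or_lt_of_le hab with rfl | h
    · exact le_refl _
    · exact (kdvF_strictAnti k γ hk hγ ha h).le
  -- value at peaks
  have hDpeak : ∀ m : ℕ, m ≤ N → kdvD N γ ((2 * (m : ℝ) - (N : ℝ)) * γ) = 0 := by
    intro m hm
    have hpt : (2 * (m : ℝ) - (N : ℝ)) * γ = kdvPk N γ m := rfl
    rw [hpt]
    have := kdvD_eq_of_close (ξ := kdvPk N γ m) hγ hm (by simp [abs_nonneg]; linarith)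
    simpa using this
  have hFzero : kdvF k γ 0 = 2 * k ^ 2 * (sech γ) ^ 2 := by
    rw [kdvF, hsech, zero_add]
  have humax : ∀ ξ : ℝ, u ξ ≤ kdvF k γ 0 := by
    intro ξ
    rw [key ξ]
    exact Fanti 0 _ le_rfl (kdvD_nonneg N γ ξ)
  refine ⟨?_, ?_, ?_⟩
  · have : u = fun ξ => kdvF k γ (kdvD N γ ξ) := funext key
    rw [this]
    exact (kdvF_cont k γ).comp (kdvD_continuous N γ)
  · intro m hm
    have hval : u ((2 * (m : ℝ) - (N : ℝ)) * γ) = 2 * k ^ 2 * (sech γ) ^ 2 := by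
      rw [key, hDpeak m hm, hFzero]
    refine ⟨?_, hval⟩
    apply Filter.Eventually.of_forall
    intro y
    rw [hval, ← hFzero]
    exact humax y
  · intro ξ hmax
    obtain ⟨j0, hj0mem, hj0⟩ :=
      Finset.exists_mem_eq_inf' (s := Finset.range (N+1)) (by simp)
        (fun j => |ξ - kdvPk N γ j|)
    have hj0N : j0 ≤ N := Nat.lt_succ_iff.1 (Finset.mem_range.1 hj0mem)
    set c := kdvPk N γ j0 with hcdef
    by_cases hzero : ξ = c
    · exact ⟨j0, hj0N, hzero⟩
    · exfalso
      have hdpos : 0 < kdvD N γ ξ := by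
        rw [show kdvD N γ ξ = |ξ - c| from hj0]
        exact abs_pos.2 (sub_ne_zero.2 hzero)
      rw [IsLocalMax, IsMaxFilter, Metric.eventually_nhds_iff] at hmax
      obtain ⟨ε, hε, hball⟩ := hmax
      rcases lt_or_gt_of_ne hzero with hlt | hgt
      · -- ξ < c : move right
        set t : ℝ := min ε (c - ξ) / 2 with htdef
        have ht0 : 0 < t := by
          have : 0 < min ε (c - ξ) := lt_min hε (by linarith)
          simpa [htdef] using half_pos this
        have htε : t < ε := by
          have : min ε (c - ξ) ≤ ε := min_le_left _ _
          simp only [htdef]; linarith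
        have htc : t ≤ (c - ξ) / 2 := by
          have : min ε (c - ξ) ≤ c - ξ := min_le_right _ _
          simp only [htdef]; linarith
        have hdy : kdvD N γ (ξ + t) < kdvD N γ ξ := by
          have h1' : kdvD N γ (ξ + t) ≤ |ξ + t - c| := kdvD_le N γ _ hj0N
          have h2' : |ξ + t - c| = c - ξ - t := by
            rw [abs_of_nonpos (by linarith)]; ring
          have h3' : kdvD N γ ξ = c - ξ := by
            rw [show kdvD N γ ξ = |ξ - c| from hj0, abs_of_nonpos (by linarith)]; ring
          rw [h3']; linarith
        have := hball (y := ξ + t) (by rw [Real.dist_eq]; rw [abs_of_nonneg (by linarith)]; linarith)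
        rw [key ξ, key (ξ + t)] at this
        exact absurd this (not_le.2 (kdvF_strictAnti k γ hk hγ (kdvD_nonneg N γ _) hdy))
      · -- c < ξ : move left
        set t : ℝ := min ε (ξ - c) / 2 with htdef
        have ht0 : 0 < t := by
          have : 0 < min ε (ξ - c) := lt_min hε (by linarith)
          simpa [htdef] using half_pos this
        have htε : t < ε := by
          have : min ε (ξ - c) ≤ ε := min_le_left _ _
          simp only [htdef]; linarith
        have htc : t ≤ (ξ - c) / 2 := by
          have : min ε (ξ - c) ≤ ξ - c := min_le_right _ _
          simp only [htdef]; linarith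
        have hdy : kdvD N γ (ξ - t) < kdvD N γ ξ := by
          have h1' : kdvD N γ (ξ - t) ≤ |ξ - t - c| := kdvD_le N γ _ hj0N
          have h2' : |ξ - t - c| = ξ - c - t := by
            rw [abs_of_nonneg (by linarith)]; ring
          have h3' : kdvD N γ ξ = ξ - c := by
            rw [show kdvD N γ ξ = |ξ - c| from hj0, abs_of_nonneg (by linarith)]
          rw [h3']; linarith
        have := hball (y := ξ - t) (by rw [Real.dist_eq]; rw [abs_of_nonpos (by linarith)]; linarith)
        rw [key ξ, key (ξ - t)] at this
        exact absurd this (not_le.2 (kdvF_strictAnti k γ hk hγ (kdvD_nonneg N γ _) hdy))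
end
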